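/- arXiv:math/0007026 — 2 statements merged into one kernel-verified Lean document; each statement's English description precedes it below -/
import Mathlib

section
/- Let r be a real number with |r| < 1, and let (r_k)_{k≥0} be a real sequence with r_0 = 1, r_1 = r, |r_k| ≤ 1 for all k, satisfying the recurrence (1 + r_2) r_k = r (r_{k-1} + r_{k+1}) for all k ≥ 1, where additionally 2|r| < 1 + r_2. Then r_k = r^k for all k. -/
/-!
For `k ≥ 1` the recurrence gives `(1 + s₂) |s_k| ≤ |r| (|s_{k-1}| + |s_{k+1}|)`, and since
`2 |r| < 1 + s₂` a bounded solution decays geometrically. The quadratic form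
`r (s_{k+1}² + s_k²) - (1 + s₂) s_k s_{k+1}` is conserved by the recurrence, so it vanishes;
at `k = 0` it equals `r (r² - s₂)`, which forces `s₂ = r²`. The recurrence then reads
`(1 + r²) s_{k+1} = r (s_k + s_{k+2})`, whose solution with `s₀ = 1`, `s₁ = r` is `r^k`.
-/

open Filter Topology

namespace TwoSidedRecurrence

variable {s : ℕ → ℝ}

theorem abs_le_mul_pow_of_abs_le {q B : ℝ} (hq : 0 ≤ q) (hbd : ∀ k, |s k| ≤ B)
    (h : ∀ k, |s (k + 1)| ≤ q / 2 * (|s k| + |s (k + 2)|)) :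
    ∀ m k, m ≤ k → |s k| ≤ B * q ^ m := by
  intro m
  induction m with
  | zero => simpa using hbd
  | succ m ih =>
    rintro (_ | j) hj
    · omega
    calc |s (j + 1)| ≤ q / 2 * (|s j| + |s (j + 2)|) := h j
      _ ≤ q / 2 * (B * q ^ m + B * q ^ m) := by
          gcongr
          exacts [ih j (by omega), ih (j + 2) (by omega)]
      _ = B * q ^ (m + 1) := by ring

theorem tendsto_zero_of_abs_le {a c B : ℝ} (ha : 0 ≤ a) (hac : 2 * a < c)
    (hbd : ∀ k, |s k| ≤ B) (h : ∀ k, c * |s (k + 1)| ≤ a * (|s k| + |s (k + 2)|)) :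
    Tendsto s atTop (𝓝 0) := by
  have hc : 0 < c := by linarith
  set q := 2 * a / c
  have hq0 : 0 ≤ q := by positivity
  have hq1 : q < 1 := (div_lt_one hc).2 hac
  have hstep : ∀ k, |s (k + 1)| ≤ q / 2 * (|s k| + |s (k + 2)|) := fun k => by
    rw [show q / 2 = a / c by ring, div_mul_eq_mul_div, le_div_iff₀ hc, mul_comm]
    exact h k
  have hgeom := abs_le_mul_pow_of_abs_le hq0 hbd hstep
  refine squeeze_zero_norm (fun k => hgeom k k le_rfl) ?_
  simpa using (tendsto_pow_atTop_nhds_zero_of_lt_one hq0 hq1).const_mul B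

def invariant (a c : ℝ) (s : ℕ → ℝ) (k : ℕ) : ℝ :=
  a * (s (k + 1) ^ 2 + s k ^ 2) - c * (s k * s (k + 1))

variable {a c : ℝ}

theorem invariant_eq_invariant_zero (hrec : ∀ k, c * s (k + 1) = a * (s k + s (k + 2)))
    (k : ℕ) : invariant a c s k = invariant a c s 0 := by
  induction k with
  | zero => rfl
  | succ k ih => rw [← ih, invariant, invariant]; linear_combination (s k - s (k + 2)) * hrec k

theorem invariant_zero_eq_zero (hrec : ∀ k, c * s (k + 1) = a * (s k + s (k + 2)))
    (hs : Tendsto s atTop (𝓝 0)) : invariant a c s 0 = 0 := by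
  have hlim : Tendsto (invariant a c s) atTop (𝓝 (a * (0 ^ 2 + 0 ^ 2) - c * (0 * 0))) := by
    have hs1 := (tendsto_add_atTop_iff_nat 1).2 hs
    exact ((hs1.pow 2).add (hs.pow 2)).const_mul a |>.sub ((hs.mul hs1).const_mul c)
  rw [funext (invariant_eq_invariant_zero hrec)] at hlim
  simpa using tendsto_nhds_unique tendsto_const_nhds hlim

theorem eq_pow_of_recurrence (hrec : ∀ k, (1 + a ^ 2) * s (k + 1) = a * (s k + s (k + 2)))
    (h0 : s 0 = 1) (h1 : s 1 = a) : ∀ k, s k = a ^ k := by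
  have hd : ∀ k, s (k + 1) - a * s k = a * (s (k + 2) - a * s (k + 1)) := fun k => by
    linear_combination hrec k
  have hsucc : ∀ k, s (k + 1) = a * s k := by
    intro k
    induction k with
    | zero => rw [h0, h1, mul_one]
    | succ k ih =>
      have hzero : a * (s (k + 2) - a * s (k + 1)) = 0 := by rw [← hd k, ih, sub_self]
      rcases mul_eq_zero.1 hzero with ha | h
      · subst ha
        simpa using hd (k + 1)
      · linarith
  intro k
  induction k with
  | zero => simpa using h0
  | succ k ih => rw [hsucc k, ih, pow_succ, mul_comm]

end TwoSidedRecurrence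

open TwoSidedRecurrence in
theorem stmt_0_general (r : ℝ) (s : ℕ → ℝ)
    (h0 : s 0 = 1) (h1 : s 1 = r)
    (hbd : ∀ k, |s k| ≤ 1)
    (hrec : ∀ k : ℕ, 1 ≤ k → (1 + s 2) * s k = r * (s (k - 1) + s (k + 1)))
    (hgap : 2 * |r| < 1 + s 2) :
    ∀ k, s k = r ^ k := by
  have hrec' : ∀ k, (1 + s 2) * s (k + 1) = r * (s k + s (k + 2)) := fun k => by
    simpa using hrec (k + 1) le_add_self
  have hc : 0 < 1 + s 2 := by linarith [abs_nonneg r]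
  have hdecay : Tendsto s atTop (𝓝 0) := by
    refine tendsto_zero_of_abs_le (abs_nonneg r) hgap hbd fun k => ?_
    calc (1 + s 2) * |s (k + 1)| = |r| * |s k + s (k + 2)| := by
          rw [← abs_of_pos hc, ← abs_mul, hrec', abs_mul]
      _ ≤ |r| * (|s k| + |s (k + 2)|) := by gcongr; exact abs_add_le _ _
  have hinv := invariant_zero_eq_zero hrec' hdecay
  rw [invariant, h0, h1] at hinv
  have hs2 : s 2 = r ^ 2 := by
    rcases eq_or_ne r 0 with rfl | hr
    · have hrec1 := hrec' 1
      simp only [zero_mul] at hrec1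
      nlinarith
    · exact mul_left_cancel₀ hr (by linear_combination -hinv)
  rw [hs2] at hrec'
  exact eq_pow_of_recurrence hrec' h0 h1

theorem stmt_0 (r : ℝ) (s : ℕ → ℝ) (hr : |r| < 1)
    (h0 : s 0 = 1) (h1 : s 1 = r)
    (hbd : ∀ k, |s k| ≤ 1)
    (hrec : ∀ k : ℕ, 1 ≤ k → (1 + s 2) * s k = r * (s (k - 1) + s (k + 1)))
    (hgap : 2 * |r| < 1 + s 2) :
    ∀ k, s k = r ^ k :=
  stmt_0_general r s h0 h1 hbd hrec hgap
end

section
/- Let r be real with 0 < |r| < 1 and let A be real with A(1+r^2) ≠ 1. Define q = (r^2 - A(1+r^2)) / (r^4 (1 - A(1+r^2))). If r^2/(1+r^2)^2 ≤ A ≤ r^2/(1+r^4), then -1 ≤ q ≤ 1. -/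
theorem stmt_10 (r A : ℝ) (hr : 0 < |r|) (hr' : |r| < 1) (hA : A * (1 + r ^ 2) ≠ 1)
    (q : ℝ) (hq : q = (r ^ 2 - A * (1 + r ^ 2)) / (r ^ 4 * (1 - A * (1 + r ^ 2))))
    (hlo : r ^ 2 / (1 + r ^ 2) ^ 2 ≤ A) (hhi : A ≤ r ^ 2 / (1 + r ^ 4)) :
    -1 ≤ q ∧ q ≤ 1 := by
  have hr0 : r ≠ 0 := by simpa using abs_pos.mp hr
  have ht0 : 0 < r ^ 2 := by positivity
  have ht1 : r ^ 2 < 1 := by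
    have := sq_abs r
    nlinarith
  have h4 : (0:ℝ) < 1 + r ^ 4 := by positivity
  have hhi' : A * (1 + r ^ 4) ≤ r ^ 2 := by
    exact (le_div_iff₀ h4).mp hhi
  have hlo' : r ^ 2 ≤ A * (1 + r ^ 2) ^ 2 := by
    have : (0:ℝ) < (1 + r ^ 2) ^ 2 := by positivity
    rwa [div_le_iff₀ this] at hlo
  have hden : 0 < 1 - A * (1 + r ^ 2) := by
    nlinarith
  have hD : 0 < r ^ 4 * (1 - A * (1 + r ^ 2)) := by positivity
  constructor
  · rw [hq, le_div_iff₀ hD]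
    nlinarith
  · rw [hq, div_le_one hD]
    nlinarith
end
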